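/- arXiv:1110.2013 — 2 statements merged into one kernel-verified Lean document; each statement's English description precedes it below -/
import Mathlib

section
/- In the projective (inverse) limit {X; π^j} of a covariant system {X^j, ι_i^j} over a codirected set in which all transition morphisms ι_i^j are strong monomorphisms, the projection morphisms π^j are strong monomorphisms. -/
open CategoryTheory Limits

/-- If in a covariant system over a codirected poset all transition morphisms
are strong monomorphisms, then the projections of any projective (inverse)
limit of the system are strong monomorphisms. -/
theorem limit_projections_strongMono_of_transitions_strongMono
    {J : Type*} [Preorder J] [IsDirected J (fun i j => j ≤ i)]
    {C : Type*} [Category C] (F : J ⥤ C)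
    (hsm : ∀ {i j : J} (h : i ⟶ j), StrongMono (F.map h))
    (c : Cone F) (hc : IsLimit c) (j : J) :
    StrongMono (c.π.app j) := by
  have hdir : ∀ k : J, ∃ i, i ≤ j ∧ i ≤ k := fun k =>
    directed_of (fun i j => j ≤ i) j k
  choose pick hpj hpk using hdir
  have mono_j : Mono (c.π.app j) := by
    constructor
    intro Z f g hfg
    apply hc.hom_ext
    intro k
    have hmi : Mono (F.map (homOfLE (hpj k))) := (hsm (homOfLE (hpj k))).mono
    have h1 : f ≫ c.π.app (pick k) = g ≫ c.π.app (pick k) := by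
      rw [← cancel_mono (F.map (homOfLE (hpj k)))]
      rw [Category.assoc, Category.assoc, c.w]
      exact hfg
    rw [← c.w (homOfLE (hpk k)), ← Category.assoc, h1, Category.assoc]
  refine ⟨mono_j, fun A B z hz => ?_⟩
  constructor
  intro u v sq
  have hlift : ∀ (i : J) (h : i ≤ j),
      ∃ l : B ⟶ F.obj i, z ≫ l = u ≫ c.π.app i ∧ l ≫ F.map (homOfLE h) = v := by
    intro i h
    have sqi : CommSq (u ≫ c.π.app i) z (F.map (homOfLE h)) v := by
      constructor
      rw [Category.assoc, c.w]
      exact sq.w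
    haveI := (hsm (homOfLE h)).rlp z
    exact ⟨sqi.lift, sqi.fac_left, sqi.fac_right⟩
  choose w hw1 hw2 using hlift
  -- build a cone on F with point B
  let s : Cone F :=
    { pt := B
      π :=
        { app := fun k => w (pick k) (hpj k) ≫ F.map (homOfLE (hpk k))
          naturality := by
            intro k k' f
            dsimp
            rw [← cancel_epi z]
            simp only [Category.id_comp, ← Category.assoc, hw1]
            simp only [Category.assoc, ← Functor.map_comp, c.w] } }
  have fac_left : z ≫ hc.lift s = u := by
    apply hc.hom_ext
    intro k
    rw [Category.assoc, hc.fac]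
    show z ≫ w (pick k) (hpj k) ≫ F.map (homOfLE (hpk k)) = u ≫ c.π.app k
    rw [← Category.assoc, hw1, Category.assoc, c.w]
  have fac_right : hc.lift s ≫ c.π.app j = v := by
    rw [hc.fac]
    show w (pick j) (hpj j) ≫ F.map (homOfLE (hpk j)) = v
    exact hw2 (pick j) (hpj j)
  exact CommSq.HasLift.mk' ⟨hc.lift s, fac_left, fac_right⟩
end

section
/- In a category with a nodal decomposition, a monomorphism μ is a strong monomorphism if and only if in its nodal decomposition μ = im∞(μ) ∘ red∞(μ) ∘ coim∞(μ) both coim∞(μ) and red∞(μ) are isomorphisms (equivalently, μ is isomorphic to its nodal image im∞(μ)). -/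
open CategoryTheory

/-- In a category with nodal decomposition (every morphism factors as a strong
epimorphism, followed by a bimorphism, followed by a strong monomorphism), a
monomorphism `μ` is a strong monomorphism iff in its nodal decomposition
`μ = ι ∘ ρ ∘ γ` both the nodal coimage `γ` and the nodal reduced part `ρ` are
isomorphisms. -/
theorem strongMono_iff_nodal_components_isIso {C : Type*} [Category C]
    (hnodal : ∀ {X Y : C} (φ : X ⟶ Y), ∃ (I J : C) (γ : X ⟶ I) (ρ : I ⟶ J)
      (ι : J ⟶ Y), StrongEpi γ ∧ Mono ρ ∧ Epi ρ ∧ StrongMono ι ∧ γ ≫ ρ ≫ ι = φ)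
    {A B : C} (μ : A ⟶ B) [Mono μ] {I J : C} (γ : A ⟶ I) (ρ : I ⟶ J) (ι : J ⟶ B)
    (hγ : StrongEpi γ) (hρm : Mono ρ) (hρe : Epi ρ) (hι : StrongMono ι)
    (hfac : γ ≫ ρ ≫ ι = μ) :
    StrongMono μ ↔ (IsIso γ ∧ IsIso ρ) := by
  haveI := hγ; haveI := hρm; haveI := hρe; haveI := hι
  constructor
  · intro hμ
    -- γ is mono since μ is mono
    have hγm : Mono γ := by
      constructor
      intro Z a b h
      have : a ≫ μ = b ≫ μ := by rw [← hfac]; simp only [← Category.assoc, h]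
      exact (cancel_mono μ).1 this
    haveI := hγm
    have hγiso : IsIso γ := isIso_of_mono_of_strongEpi γ
    refine ⟨hγiso, ?_⟩
    have h1 : ρ ≫ ι = inv γ ≫ μ := by
      rw [← hfac]; simp
    have h2 : StrongMono (ρ ≫ ι) := by
      rw [h1]
      exact strongMono_comp _ _
    haveI := h2
    haveI h3 : StrongMono ρ := strongMono_of_strongMono ρ ι
    exact isIso_of_epi_of_strongMono ρ
  · rintro ⟨h1, h2⟩
    rw [← hfac]
    haveI : StrongMono (ρ ≫ ι) := strongMono_comp _ _
    exact strongMono_comp _ _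
end
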